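/- Let k be a field and a < b, c < d in ℝ. Then Ext¹_gr(k[a,b), k[c,d)) ≅ k[c−b, min{c−a, d−b}). -/

import Mathlib

open CategoryTheory

noncomputable section
attribute [local instance] Classical.propDecidable
set_option linter.unusedSectionVars false

variable (R : Type) [Ring R] {P : Type} [Preorder P]

/-- Condition that a subset is order-convex. -/
def IsConvexSet (I : Set P) : Prop := ∀ ⦃x y z : P⦄, x ∈ I → z ∈ I → x ≤ y → y ≤ z → y ∈ I

/-- The value of the interval persistence module at a point. -/
def intervalObj (I : Set P) (a : P) : Submodule R R :=
  if a ∈ I then (⊤ : Submodule R R) else ⊥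

lemma intervalObj_eq_zero {I : Set P} {a : P} (h : a ∉ I) (x : intervalObj R I a) :
    x = 0 := by
  have hx := x.2
  simp only [intervalObj, if_neg h, Submodule.mem_bot] at hx
  exact Subtype.ext hx

/-- The structure map of the interval module between two degrees. -/
def intervalMapAux (I : Set P) (a b : P) :
    (intervalObj R I a) →ₗ[R] (intervalObj R I b) :=
  if h : a ∈ I ∧ b ∈ I then
    Submodule.inclusion (by simp [intervalObj, h.1, h.2])
  else 0

lemma intervalMapAux_coe {I : Set P} {a b : P} (ha : a ∈ I) (hb : b ∈ I)
    (x : intervalObj R I a) : ((intervalMapAux R I a b x : R)) = (x : R) := by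
  simp [intervalMapAux, ha, hb]

lemma intervalMapAux_of_not {I : Set P} {a b : P} (h : ¬(a ∈ I ∧ b ∈ I))
    (x : intervalObj R I a) : intervalMapAux R I a b x = 0 := by
  simp [intervalMapAux, h]

/-- The interval (indicator) persistence module of a convex set `I`,
as a functor from the preorder `P` to `R`-modules. -/
def intervalModule (I : Set P) (hI : IsConvexSet I) : P ⥤ ModuleCat R where
  obj a := ModuleCat.of R (intervalObj R I a)
  map {a b} f := ModuleCat.ofHom (intervalMapAux R I a b)
  map_id a := by
    apply ModuleCat.hom_ext; apply LinearMap.ext; intro (x : intervalObj R I a)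
    by_cases h : a ∈ I
    · exact Subtype.ext (intervalMapAux_coe R h h x)
    · rw [intervalObj_eq_zero R h x]
      simp
  map_comp {a b c} f g := by
    apply ModuleCat.hom_ext; apply LinearMap.ext; intro (x : intervalObj R I a)
    show intervalMapAux R I a c x = intervalMapAux R I b c (intervalMapAux R I a b x)
    by_cases ha : a ∈ I
    · by_cases hc : c ∈ I
      · have hb : b ∈ I := hI ha hc (leOfHom f) (leOfHom g)
        apply Subtype.ext
        rw [intervalMapAux_coe R ha hc, intervalMapAux_coe R hb hc,
          intervalMapAux_coe R ha hb]
      · rw [intervalMapAux_of_not R (fun h => hc h.2),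
          intervalMapAux_of_not R (fun h => hc h.2)]
    · rw [intervalObj_eq_zero R ha x]
      simp

end

lemma IsConvexSet.of_ordConnected {P : Type} [Preorder P] {s : Set P}
    (h : s.OrdConnected) : IsConvexSet s :=
  fun _ _ _ hx hz hxy hyz => h.out hx hz ⟨hxy, hyz⟩

open CategoryTheory

noncomputable section
variable (k : Type) [Field k]

/-- The translation functor `a ↦ a + s` on `(ℝ,≤)`. -/
def shiftFunctor' (s : ℝ) : ℝ ⥤ ℝ :=
  Monotone.functor (f := fun a => a + s) (fun _ _ h => add_le_add_left h s)

/-- For `s ≤ t`, the canonical natural transformation `N(s) ⟶ N(t)` between shifts. -/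
def shiftTrans (N : ℝ ⥤ ModuleCat k) {s t : ℝ} (h : s ≤ t) :
    shiftFunctor' s ⋙ N ⟶ shiftFunctor' t ⋙ N where
  app a := N.map (homOfLE (add_le_add_right h a))
  naturality {a b} f := by
    dsimp [shiftFunctor']
    rw [← N.map_comp, ← N.map_comp]
    congr 1

lemma shiftTrans_eq_id (N : ℝ ⥤ ModuleCat k) {s : ℝ} (h : s ≤ s) :
    shiftTrans k N h = 𝟙 _ := by
  apply NatTrans.ext
  funext a
  show N.map (homOfLE (add_le_add_right h a)) = _
  rw [show (homOfLE (add_le_add_right h a) : a + s ⟶ a + s) = 𝟙 (a + s) from rfl, N.map_id]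
  rfl

lemma shiftTrans_comp (N : ℝ ⥤ ModuleCat k) {s t u : ℝ} (h : s ≤ t) (h' : t ≤ u)
    (h'' : s ≤ u) :
    shiftTrans k N h ≫ shiftTrans k N h' = shiftTrans k N h'' := by
  apply NatTrans.ext
  funext a
  rw [NatTrans.comp_app]
  show N.map (homOfLE (add_le_add_right h a)) ≫ N.map (homOfLE (add_le_add_right h' a)) =
    N.map (homOfLE (add_le_add_right h'' a))
  rw [← N.map_comp]
  congr 1

/-- The graded internal hom of persistence modules:
`Hom(M,N)_s = Hom(M, N(s))`, the space of natural transformations into the shift. -/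
def homUnderline (M N : ℝ ⥤ ModuleCat k) : ℝ ⥤ ModuleCat k where
  obj s := ModuleCat.of k (M ⟶ shiftFunctor' s ⋙ N)
  map {s t} f := ModuleCat.ofHom
    { toFun := fun α => α ≫ shiftTrans k N (leOfHom f)
      map_add' := fun α β => Preadditive.add_comp _ _ _ _ _ _
      map_smul' := fun c α => Linear.smul_comp _ _ _ _ _ _ }
  map_id s := by
    apply ModuleCat.hom_ext; apply LinearMap.ext; intro (α : M ⟶ shiftFunctor' s ⋙ N)
    show α ≫ shiftTrans k N (leOfHom (𝟙 s)) = α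
    rw [shiftTrans_eq_id, Category.comp_id]
  map_comp {s t u} f g := by
    apply ModuleCat.hom_ext; apply LinearMap.ext; intro (α : M ⟶ shiftFunctor' s ⋙ N)
    show α ≫ shiftTrans k N (leOfHom (f ≫ g)) =
      (α ≫ shiftTrans k N (leOfHom f)) ≫ shiftTrans k N (leOfHom g)
    rw [Category.assoc, shiftTrans_comp k N (leOfHom f) (leOfHom g) (leOfHom (f ≫ g))]

end

open CategoryTheory

noncomputable section
variable (k : Type) [Field k]

lemma shiftTrans_whiskerLeft {N N' : ℝ ⥤ ModuleCat k} (φ : N ⟶ N') {s t : ℝ}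
    (h : s ≤ t) :
    shiftTrans k N h ≫ Functor.whiskerLeft (shiftFunctor' t) φ =
      Functor.whiskerLeft (shiftFunctor' s) φ ≫ shiftTrans k N' h := by
  apply NatTrans.ext
  funext a
  rw [NatTrans.comp_app, NatTrans.comp_app]
  show N.map (homOfLE (add_le_add_right h a)) ≫ φ.app (a + t) =
    φ.app (a + s) ≫ N'.map (homOfLE (add_le_add_right h a))
  exact φ.naturality _

/-- Functoriality of the graded internal hom in the second variable. -/
def homUnderlineMap (M : ℝ ⥤ ModuleCat k) {N N' : ℝ ⥤ ModuleCat k} (φ : N ⟶ N') :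
    homUnderline k M N ⟶ homUnderline k M N' where
  app s := ModuleCat.ofHom
    { toFun := fun α => α ≫ Functor.whiskerLeft (shiftFunctor' s) φ
      map_add' := fun α β => Preadditive.add_comp _ _ _ _ _ _
      map_smul' := fun c α => Linear.smul_comp _ _ _ _ _ _ }
  naturality {s t} f := by
    apply ModuleCat.hom_ext; apply LinearMap.ext; intro (α : M ⟶ shiftFunctor' s ⋙ N)
    show (α ≫ shiftTrans k N (leOfHom f)) ≫ Functor.whiskerLeft (shiftFunctor' t) φ =
      (α ≫ Functor.whiskerLeft (shiftFunctor' s) φ) ≫ shiftTrans k N' (leOfHom f)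
    rw [Category.assoc, Category.assoc, shiftTrans_whiskerLeft]

end

open CategoryTheory

noncomputable section
attribute [local instance] Classical.propDecidable
set_option linter.unusedSectionVars false
variable (R : Type) [Ring R] {P : Type} [Preorder P]

/-- The degreewise component of a morphism between interval modules. -/
def intervalCross (I J : Set P) (a : P) :
    (intervalObj R I a) →ₗ[R] (intervalObj R J a) :=
  if h : a ∈ I ∧ a ∈ J then
    Submodule.inclusion (by simp [intervalObj, h.1, h.2])
  else 0

lemma intervalCross_coe {I J : Set P} {a : P} (hI : a ∈ I) (hJ : a ∈ J)
    (x : intervalObj R I a) : ((intervalCross R I J a x : R)) = (x : R) := by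
  simp [intervalCross, hI, hJ]

lemma intervalCross_of_not {I J : Set P} {a : P} (h : ¬(a ∈ I ∧ a ∈ J))
    (x : intervalObj R I a) : intervalCross R I J a x = 0 := by
  simp [intervalCross, h]

/-- The canonical morphism of interval persistence modules, whose component at a point
in `I ∩ J` is the identity of `R` and which is zero elsewhere.  The hypothesis `hcond`
is exactly the condition making this family of maps natural. -/
def intervalHom (I J : Set P) (hI : IsConvexSet I) (hJ : IsConvexSet J)
    (hcond : ∀ ⦃x y : P⦄, x ≤ y → x ∈ I → y ∈ J → (y ∈ I ↔ x ∈ J)) :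
    intervalModule R I hI ⟶ intervalModule R J hJ where
  app a := ModuleCat.ofHom (intervalCross R I J a)
  naturality {a b} f := by
    apply ModuleCat.hom_ext; apply LinearMap.ext; intro (x : intervalObj R I a)
    show intervalCross R I J b (intervalMapAux R I a b x) =
      intervalMapAux R J a b (intervalCross R I J a x)
    by_cases ha : a ∈ I
    · by_cases hbJ : b ∈ J
      · have hiff := hcond (leOfHom f) ha hbJ
        by_cases hbI : b ∈ I
        · have haJ : a ∈ J := hiff.mp hbI
          apply Subtype.ext
          rw [intervalCross_coe R hbI hbJ, intervalMapAux_coe R ha hbI,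
            intervalMapAux_coe R haJ hbJ, intervalCross_coe R ha haJ]
        · have haJ : a ∉ J := fun h => hbI (hiff.mpr h)
          rw [intervalCross_of_not R (fun h => hbI h.1),
            intervalCross_of_not R (fun h => haJ h.2)]
          simp
      · rw [intervalCross_of_not R (fun h => hbJ h.2),
          intervalMapAux_of_not R (fun h => hbJ h.2)]
    · rw [intervalObj_eq_zero R ha x]
      simp

end

/-! A morphism out of `k[a,b)` is determined by the image `α_a(1)` of the generator at `a`.
This identifies `Hom(k[a,b), k(−∞,e)(s))` with `k` for `e − b ≤ s < e − a` and with `0`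
otherwise, and the map induced by `k(−∞,d) → k(−∞,c)` becomes the identity of `k` wherever
source and target are both nonzero, i.e. for `d − b ≤ s < c − a`. What survives in the
cokernel is `k` in the degrees `c − b ≤ s < min (c − a) (d − b)`: the projection onto
`k[c − b, min (c − a) (d − b))` reading off `α_a(1)` is degreewise surjective with kernel the
image, and colimits in a functor category are detected degreewise. -/

open CategoryTheory Limits

noncomputable section

section IntervalModule

variable {R : Type} [Ring R] {P : Type} {I J : Set P}

variable (R) in
open Classical in
def intervalObjMk (I : Set P) (p : P) : R →ₗ[R] intervalObj R I p :=
  LinearMap.codRestrict _ (if p ∈ I then LinearMap.id else 0) fun r => by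
    by_cases h : p ∈ I <;> simp [intervalObj, h]

lemma intervalObjMk_val {p : P} (hp : p ∈ I) (r : R) : (intervalObjMk R I p r).1 = r := by
  simp [intervalObjMk, hp]

variable [Preorder P] {hI : IsConvexSet I} {hJ : IsConvexSet J}

variable (R) in
def intervalGen {p : P} (hp : p ∈ I) : (intervalModule R I hI).obj p :=
  ⟨1, by simp [intervalObj, hp]⟩

lemma intervalModule_obj_eq_zero {p : P} (hp : p ∉ I) (x : (intervalModule R I hI).obj p) :
    x = 0 :=
  intervalObj_eq_zero R hp x

lemma intervalModule_map_val {p q : P} (hq : q ∈ I) (f : p ⟶ q)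
    (x : (intervalModule R I hI).obj p) : ((intervalModule R I hI).map f x).1 = x.1 := by
  by_cases hp : p ∈ I
  · exact intervalMapAux_coe R hp hq x
  · rw [intervalModule_obj_eq_zero hp x, map_zero]
    rfl

lemma intervalModule_map_injective {p q : P} (hq : q ∈ I) (f : p ⟶ q) :
    Function.Injective ((intervalModule R I hI).map f) := fun x y hxy =>
  Subtype.ext <| by
    rw [← intervalModule_map_val hq f x, ← intervalModule_map_val hq f y, hxy]

lemma intervalHom_app_val
    {h : ∀ ⦃x y : P⦄, x ≤ y → x ∈ I → y ∈ J → (y ∈ I ↔ x ∈ J)} {p : P} (hp : p ∈ J)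
    (x : (intervalModule R I hI).obj p) : ((intervalHom R I J hI hJ h).app p x).1 = x.1 := by
  by_cases hpI : p ∈ I
  · exact intervalCross_coe R hpI hp x
  · rw [intervalModule_obj_eq_zero hpI x, map_zero]
    rfl

lemma intervalModule_hom_ext {F : P ⥤ ModuleCat R} {α β : intervalModule R I hI ⟶ F} {a : P}
    (ha : IsLeast I a) (h : α.app a (intervalGen R ha.1) = β.app a (intervalGen R ha.1)) :
    α = β := by
  ext t x
  by_cases ht : t ∈ I
  · have hx : x = x.1 • (intervalModule R I hI).map (homOfLE (ha.2 ht)) (intervalGen R ha.1) :=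
      Subtype.ext (by
        change x.1 = x.1 * ((intervalModule R I hI).map _ (intervalGen R ha.1)).1
        rw [intervalModule_map_val ht, intervalGen, mul_one])
    rw [hx, map_smul, map_smul, ← ConcreteCategory.comp_apply, ← ConcreteCategory.comp_apply,
      α.naturality, β.naturality, ConcreteCategory.comp_apply, ConcreteCategory.comp_apply, h]
  · rw [intervalModule_obj_eq_zero ht x, map_zero, map_zero]

lemma app_intervalGen_eq_zero {F : P ⥤ ModuleCat R} (α : intervalModule R I hI ⟶ F) {a b : P}
    (ha : a ∈ I) (hb : b ∉ I) (f : a ⟶ b) (hF : Function.Injective (F.map f)) :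
    α.app a (intervalGen R ha) = 0 := by
  apply hF
  rw [map_zero, ← ConcreteCategory.comp_apply, ← α.naturality, ConcreteCategory.comp_apply,
    intervalModule_obj_eq_zero hb ((intervalModule R I hI).map f _), map_zero]

end IntervalModule

def isColimitCokernelCoforkOfSurjectiveOfExact {R : Type*} [Ring R]
    {C : Type*} [Category* C] {F G H : C ⥤ ModuleCat R} (f : F ⟶ G) (g : G ⟶ H)
    (w : f ≫ g = 0)
    (hg : ∀ X, Function.Surjective (g.app X))
    (hfg : ∀ X y, g.app X y = 0 → ∃ x, f.app X x = y) :
    IsColimit (CokernelCofork.ofπ g w) := by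
  refine evaluationJointlyReflectsColimits _ fun X => ?_
  refine (isColimitMapCoconeCoforkEquiv' ((evaluation C (ModuleCat R)).obj X) w).symm ?_
  let S := ShortComplex.mk (f.app X) (g.app X) (by rw [← NatTrans.comp_app, w]; rfl)
  have : Epi S.g := (ModuleCat.epi_iff_surjective _).2 (hg X)
  exact ((ShortComplex.moduleCat_exact_iff S).2 (hfg X)).gIsCokernel

section Persistence

variable (k : Type) [Field k]

abbrev icoModule (a b : ℝ) : ℝ ⥤ ModuleCat k :=
  intervalModule k (Set.Ico a b) (.of_ordConnected Set.ordConnected_Ico)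

abbrev iioModule (e : ℝ) : ℝ ⥤ ModuleCat k :=
  intervalModule k (Set.Iio e) (.of_ordConnected Set.ordConnected_Iio)

def iioHom {c d : ℝ} (hcd : c ≤ d) : iioModule k d ⟶ iioModule k c :=
  intervalHom k _ _ _ _ fun _ _ hxy _ hy => iff_of_true (hy.trans_le hcd) (hxy.trans_lt hy)

variable {k} {a b : ℝ}

lemma iioHom_app_val {c d p : ℝ} (hcd : c ≤ d) (hp : p < c) (x : (iioModule k d).obj p) :
    ((iioHom k hcd).app p x).1 = x.1 := by
  unfold iioHom
  exact intervalHom_app_val (show p ∈ Set.Iio c from hp) x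

def homValue (hab : a < b) {e s : ℝ} :
    (icoModule k a b ⟶ shiftFunctor' s ⋙ iioModule k e) →ₗ[k] k where
  toFun α := (α.app a (intervalGen k (Set.left_mem_Ico.2 hab))).1
  map_add' _ _ := rfl
  map_smul' _ _ := rfl

lemma homValue_injective (hab : a < b) {e s : ℝ} :
    Function.Injective
      (homValue hab : (icoModule k a b ⟶ shiftFunctor' s ⋙ iioModule k e) →ₗ[k] k) := fun _ _ h =>
  intervalModule_hom_ext (isLeast_Ico hab) (Subtype.ext h)

lemma homValue_eq_zero_of_lt (hab : a < b) {e s : ℝ} (hbe : b + s < e)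
    (α : icoModule k a b ⟶ shiftFunctor' s ⋙ iioModule k e) : homValue hab α = 0 :=
  congrArg Subtype.val <| app_intervalGen_eq_zero α _ (fun hb => lt_irrefl b hb.2)
    (homOfLE hab.le) <| intervalModule_map_injective (hI := .of_ordConnected Set.ordConnected_Iio)
      (show b + s ∈ Set.Iio e from hbe) ((shiftFunctor' s).map (homOfLE hab.le))

lemma homValue_eq_zero_of_le (hab : a < b) {e s : ℝ} (hae : e ≤ a + s)
    (α : icoModule k a b ⟶ shiftFunctor' s ⋙ iioModule k e) : homValue hab α = 0 :=
  congrArg Subtype.val <| intervalModule_obj_eq_zero (hI := .of_ordConnected Set.ordConnected_Iio)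
    (show a + s ∉ Set.Iio e from hae.not_gt) _

/-- `shiftFunctor' s ⋙ iioModule k e` is definitionally the interval module of
`(· + s) ⁻¹' Set.Iio e`, so this is an instance of `intervalHom`. -/
def icoToShiftIio {e : ℝ} (s : ℝ) (h : e ≤ b + s) :
    icoModule k a b ⟶ shiftFunctor' s ⋙ iioModule k e :=
  intervalHom k (Set.Ico a b) ((· + s) ⁻¹' Set.Iio e) _
    (.of_ordConnected (Set.ordConnected_Iio.preimage_mono fun _ _ h => add_le_add_left h s))
    fun x y hxy hx (hy : y + s < e) =>
      iff_of_true ⟨hx.1.trans hxy, by linarith⟩ (show x + s < e by linarith)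

lemma homValue_icoToShiftIio (hab : a < b) {e s : ℝ} (h : e ≤ b + s) (has : a + s < e) :
    homValue hab (icoToShiftIio (k := k) s h) = 1 :=
  intervalHom_app_val (p := a) has _

lemma homValue_comp_shiftTrans (hab : a < b) {e s t : ℝ} (hst : s ≤ t) (hat : a + t < e)
    (α : icoModule k a b ⟶ shiftFunctor' s ⋙ iioModule k e) :
    homValue hab (α ≫ shiftTrans k (iioModule k e) hst) = homValue hab α :=
  intervalModule_map_val (hI := .of_ordConnected Set.ordConnected_Iio)
    (show a + t ∈ Set.Iio e from hat) (homOfLE (add_le_add_right hst a)) _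

lemma homValue_homUnderlineMap_iioHom (hab : a < b) {c d s : ℝ} (hcd : c ≤ d) (hac : a + s < c)
    (α : icoModule k a b ⟶ shiftFunctor' s ⋙ iioModule k d) :
    homValue hab ((homUnderlineMap k (icoModule k a b) (iioHom k hcd)).app s α) =
      homValue hab α :=
  iioHom_app_val hcd hac _

def extProj (hab : a < b) (c d : ℝ) :
    homUnderline k (icoModule k a b) (iioModule k c) ⟶
      icoModule k (c - b) (min (c - a) (d - b)) where
  app s := ModuleCat.ofHom (intervalObjMk k _ s ∘ₗ homValue hab)
  naturality s t f := by
    ext (α : icoModule k a b ⟶ shiftFunctor' s ⋙ iioModule k c)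
    by_cases ht : t ∈ Set.Ico (c - b) (min (c - a) (d - b))
    · have hst : s ≤ t := leOfHom f
      have hat : a + t < c := by linarith [ht.2.trans_le (min_le_left _ _)]
      apply Subtype.ext
      change (intervalObjMk k _ t (homValue hab (α ≫ shiftTrans k _ (leOfHom f)))).1 =
        ((icoModule k _ _).map f (intervalObjMk k _ s (homValue hab α))).1
      refine (intervalObjMk_val ht _).trans <| (homValue_comp_shiftTrans hab _ hat α).trans <|
        Eq.trans ?_ (intervalModule_map_val ht f _).symm
      by_cases hs : s ∈ Set.Ico (c - b) (min (c - a) (d - b))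
      · exact (intervalObjMk_val hs _).symm
      · have hsc : s < c - b := not_le.1 fun h => hs ⟨h, hst.trans_lt ht.2⟩
        rw [homValue_eq_zero_of_lt hab (by linarith) α, map_zero]
        rfl
    · exact (intervalModule_obj_eq_zero ht _).trans (intervalModule_obj_eq_zero ht _).symm

lemma extProj_app_val (hab : a < b) {c d s : ℝ} (hs : s ∈ Set.Ico (c - b) (min (c - a) (d - b)))
    (α : icoModule k a b ⟶ shiftFunctor' s ⋙ iioModule k c) :
    ((extProj hab c d).app s α).1 = homValue hab α :=
  intervalObjMk_val hs _

lemma homUnderlineMap_iioHom_comp_extProj (hab : a < b) {c d : ℝ} (hcd : c ≤ d) :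
    homUnderlineMap k (icoModule k a b) (iioHom k hcd) ≫ extProj hab c d = 0 := by
  ext s (α : icoModule k a b ⟶ shiftFunctor' s ⋙ iioModule k d)
  by_cases hs : s ∈ Set.Ico (c - b) (min (c - a) (d - b))
  · have hbd : b + s < d := by linarith [hs.2.trans_le (min_le_right _ _)]
    apply Subtype.ext
    change ((extProj hab c d).app s ((homUnderlineMap k _ (iioHom k hcd)).app s α)).1 = 0
    exact (extProj_app_val hab hs _).trans <|
      (homValue_homUnderlineMap_iioHom hab hcd (by linarith [hs.2.trans_le (min_le_left _ _)])
        α).trans <|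
        homValue_eq_zero_of_lt hab hbd α
  · exact intervalModule_obj_eq_zero hs _

lemma extProj_app_surjective (hab : a < b) (c d s : ℝ) :
    Function.Surjective ((extProj (k := k) hab c d).app s) := by
  intro y
  by_cases hs : s ∈ Set.Ico (c - b) (min (c - a) (d - b))
  · refine ⟨(y.1 • icoToShiftIio s (by linarith [hs.1]) :
      icoModule k a b ⟶ shiftFunctor' s ⋙ iioModule k c), Subtype.ext ?_⟩
    rw [extProj_app_val hab hs, map_smul, homValue_icoToShiftIio hab _ (by linarith [hs.2.trans_le (min_le_left _ _)]),
      smul_eq_mul, mul_one]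
  · exact ⟨0, (intervalModule_obj_eq_zero hs _).trans (intervalModule_obj_eq_zero hs _).symm⟩

lemma exists_homUnderlineMap_app_eq_of_extProj_app_eq_zero (hab : a < b) {c d : ℝ} (hcd : c ≤ d)
    (s : ℝ) (α : icoModule k a b ⟶ shiftFunctor' s ⋙ iioModule k c)
    (hα : (extProj hab c d).app s α = 0) :
    ∃ β, (homUnderlineMap k (icoModule k a b) (iioHom k hcd)).app s β = α := by
  by_cases h : d ≤ b + s ∧ a + s < c
  · refine ⟨(homValue hab α • icoToShiftIio s h.1 :
      icoModule k a b ⟶ shiftFunctor' s ⋙ iioModule k d), homValue_injective hab ?_⟩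
    rw [homValue_homUnderlineMap_iioHom hab hcd h.2, map_smul,
      homValue_icoToShiftIio hab h.1 (by linarith), smul_eq_mul, mul_one]
  · suffices hα0 : homValue hab α = 0 by
      refine ⟨0, ?_⟩
      rw [homValue_injective hab (hα0.trans (map_zero _).symm)]
      exact map_zero _
    rcases le_or_gt c (a + s) with hca | hac
    · exact homValue_eq_zero_of_le hab hca α
    rcases lt_or_ge (b + s) c with hbc | hcb
    · exact homValue_eq_zero_of_lt hab hbc α
    have hbd : b + s < d := lt_of_not_ge fun hdb => h ⟨hdb, hac⟩
    have hs : s ∈ Set.Ico (c - b) (min (c - a) (d - b)) :=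
      ⟨by linarith, lt_min (by linarith) (by linarith)⟩
    exact (extProj_app_val hab hs α).symm.trans (congrArg Subtype.val hα)

end Persistence

end

open CategoryTheory Limits in
/-- `Ext¹` is computed as the cokernel of `Hom(k[a,b), −)` applied to the injective resolution
`0 → k[c,d) → k(−∞,d) → k(−∞,c) → 0`. -/
theorem grExt_interval (k : Type) [Field k] (a b c d : ℝ) (hab : a < b) (hcd : c < d) :
    Nonempty
      (cokernel (homUnderlineMap k
          (intervalModule k (Set.Ico a b) (.of_ordConnected Set.ordConnected_Ico))
          (intervalHom k (Set.Iio d) (Set.Iio c)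
            (.of_ordConnected Set.ordConnected_Iio) (.of_ordConnected Set.ordConnected_Iio)
            (fun x y hxy _ hy =>
              iff_of_true (lt_trans hy hcd) (lt_of_le_of_lt hxy hy)))) ≅
        intervalModule k (Set.Ico (c - b) (min (c - a) (d - b)))
          (.of_ordConnected Set.ordConnected_Ico)) :=
  ⟨(cokernelIsCokernel _).coconePointUniqueUpToIso <|
    isColimitCokernelCoforkOfSurjectiveOfExact _ (extProj hab c d)
      (homUnderlineMap_iioHom_comp_extProj hab hcd.le) (extProj_app_surjective hab c d)
      (exists_homUnderlineMap_app_eq_of_extProj_app_eq_zero hab hcd.le)⟩
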